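/- Let V be a valuation ring whose maximal ideal m satisfies m² = m, and let a, x ∈ V with a ≠ 0. If c·x ∈ aV for every c ∈ m, then x ∈ aV. Equivalently, the quotient module V/aV has no nonzero elements annihilated by all of m. -/

import Mathlib

/-!
If `x ∉ aV`, then `x` divides `a` with a non-unit cofactor, so `a ∈ x·m`. The hypothesis says
`x·m ⊆ aV`, and since `m = m²` this upgrades to `x·m = x·m·m ⊆ aV·m`. Hence `a ∈ a·m`, which by
Nakayama forces `a = 0`.
-/

open IsLocalRing Ideal

theorem Ideal.mul_le_mul_right_of_sq_eq_self {R : Type*} [CommSemiring R] {I J K : Ideal R}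
    (hJ : J ^ 2 = J) (h : I * J ≤ K) : I * J ≤ K * J :=
  calc I * J = I * J * J := by rw [mul_assoc, ← sq, hJ]
    _ ≤ K * J := mul_mono_left h

theorem IsLocalRing.eq_zero_of_mem_span_singleton_mul_maximalIdeal {R : Type*} [CommRing R]
    [IsLocalRing R] {a : R} (h : a ∈ span {a} * maximalIdeal R) : a = 0 := by
  obtain ⟨y, hy, hay⟩ := mem_span_singleton_mul.mp h
  have hunit : IsUnit (1 - y) := isUnit_one_sub_self_of_mem_nonunits y hy
  have : a * (1 - y) = 0 := by rw [mul_sub, hay, mul_one, sub_self]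
  exact hunit.mul_left_eq_zero.mp this

theorem PreValuationRing.mem_span_singleton_mul_maximalIdeal_of_notMem {R : Type*} [CommRing R]
    [Nontrivial R] [PreValuationRing R] {a x : R} (hx : x ∉ span {a}) :
    a ∈ span {x} * maximalIdeal R := by
  obtain ⟨c, hac | hxc⟩ := PreValuationRing.cond a x
  · exact absurd (mem_span_singleton.mpr ⟨c, hac.symm⟩) hx
  · by_cases hc : IsUnit c
    · refine absurd (mem_span_singleton.mpr ⟨↑hc.unit⁻¹, ?_⟩) hx
      rw [← hxc, mul_assoc, IsUnit.mul_val_inv, mul_one]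
    · exact hxc ▸ mul_mem_mul (mem_span_singleton_self x) hc

/-- Let `V` be a valuation ring whose maximal ideal `m` satisfies `m ^ 2 = m`,
and `a ≠ 0`, `x` elements of `V`. If `c * x ∈ (a)` for every `c ∈ m`, then
`x ∈ (a)`; i.e. `V/aV` has no nonzero elements annihilated by all of `m`. -/
theorem mem_span_of_forall_mul_mem {V : Type*} [CommRing V] [IsDomain V] [ValuationRing V]
    (hm : (IsLocalRing.maximalIdeal V) ^ 2 = IsLocalRing.maximalIdeal V)
    (a x : V) (ha : a ≠ 0)
    (h : ∀ c ∈ IsLocalRing.maximalIdeal V, c * x ∈ Ideal.span {a}) :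
    x ∈ Ideal.span {a} := by
  by_contra hx
  have hxm : span {x} * maximalIdeal V ≤ span {a} :=
    span_singleton_mul_le_iff.mpr fun c hc ↦ mul_comm x c ▸ h c hc
  have ham : a ∈ span {a} * maximalIdeal V :=
    mul_le_mul_right_of_sq_eq_self hm hxm
      (PreValuationRing.mem_span_singleton_mul_maximalIdeal_of_notMem hx)
  exact ha (eq_zero_of_mem_span_singleton_mul_maximalIdeal ham)
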